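/- For all i, j, k ∈ {1,…,4}, the Cartan coefficient H^i_{jk} := Σ_{r=1}^{4} (g^{ir}/2) ( δg_{jr}/δx^k + δg_{kr}/δx^j − δg_{jk}/δx^r ) equals 4 δ^i_j δ^i_k σ_i(x) (no summation over i on the right-hand side), where for each index m the operator δ/δx^m := ∂/∂x^m + 4 σ_m(x) p_m ∂/∂p_m (no summation over m). -/

import Mathlib

/-- Partial derivative of `f : (Fin 4 → ℝ) → ℝ` with respect to the `i`-th coordinate. -/
noncomputable def pd (f : (Fin 4 → ℝ) → ℝ) (i : Fin 4) (v : Fin 4 → ℝ) : ℝ :=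
  deriv (fun s => f (Function.update v i s)) (v i)

/-- Kronecker delta. -/
noncomputable def kron (i j : Fin 4) : ℝ := if i = j then 1 else 0

/-- The contravariant metrical d-tensor `g^{ij} = (e^{-2σ(x)}(1-2δ^{ij})/2) 𝒫^{1/2}/(p_i p_j)`. -/
noncomputable def gup (σ : (Fin 4 → ℝ) → ℝ) (x p : Fin 4 → ℝ) (i j : Fin 4) : ℝ :=
  Real.exp (-2 * σ x) * (1 - 2 * kron i j) / 2 * Real.sqrt (∏ m, p m) / (p i * p j)

/-- The covariant metrical d-tensor `g_{jk} = (e^{2σ(x)}(1-2δ_{jk})/2) p_j p_k 𝒫^{-1/2}`. -/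
noncomputable def gdown (σ : (Fin 4 → ℝ) → ℝ) (x p : Fin 4 → ℝ) (j k : Fin 4) : ℝ :=
  Real.exp (2 * σ x) * (1 - 2 * kron j k) / 2 * p j * p k / Real.sqrt (∏ m, p m)

/-- `δg_{jk}/δx^m = ∂g_{jk}/∂x^m + 4 σ_m(x) p_m ∂g_{jk}/∂p_m` (no sum over `m`). -/
noncomputable def deltaXg (σ : (Fin 4 → ℝ) → ℝ) (x p : Fin 4 → ℝ) (m j k : Fin 4) : ℝ :=
  pd (fun x' => gdown σ x' p j k) m x
    + 4 * pd σ m x * p m * pd (fun p' => gdown σ x p' j k) m p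

lemma hasDerivAt_sigma_update (σ : (Fin 4 → ℝ) → ℝ) (hσ : ContDiff ℝ (⊤ : ℕ∞) σ)
    (x : Fin 4 → ℝ) (m : Fin 4) :
    HasDerivAt (fun s => σ (Function.update x m s)) (pd σ m x) (x m) := by
  have hu : HasDerivAt (fun s : ℝ => Function.update x m s) (Pi.single m 1) (x m) := by
    rw [hasDerivAt_pi]
    intro r
    by_cases h : r = m
    · subst h
      simpa [Function.update_apply] using (hasDerivAt_id' (x r))
    · simpa [Function.update_apply, h, Pi.single_apply] using
        hasDerivAt_const (x m) (x r)
  have hd : DifferentiableAt ℝ (fun s => σ (Function.update x m s)) (x m) :=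
    ((hσ.differentiable (by simp)).differentiableAt.comp _ hu.differentiableAt)
  exact hd.hasDerivAt

lemma pd_gdown_x (σ : (Fin 4 → ℝ) → ℝ) (hσ : ContDiff ℝ (⊤ : ℕ∞) σ)
    (x p : Fin 4 → ℝ) (m j k : Fin 4) :
    pd (fun x' => gdown σ x' p j k) m x = 2 * pd σ m x * gdown σ x p j k := by
  have hσd := hasDerivAt_sigma_update σ hσ x m
  have hexp : HasDerivAt (fun s => Real.exp (2 * σ (Function.update x m s)))
      (Real.exp (2 * σ x) * (2 * pd σ m x)) (x m) := by
    have h2 : HasDerivAt (fun s => 2 * σ (Function.update x m s)) (2 * pd σ m x) (x m) :=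
      hσd.const_mul 2
    have he : HasDerivAt Real.exp (Real.exp (2 * σ x)) (2 * σ (Function.update x m (x m))) := by
      rw [Function.update_eq_self]; exact Real.hasDerivAt_exp _
    exact he.comp (x m) h2
  have hfull : HasDerivAt (fun s => gdown σ (Function.update x m s) p j k)
      (Real.exp (2 * σ x) * (2 * pd σ m x) * (1 - 2 * kron j k) / 2 * p j * p k
        / Real.sqrt (∏ r, p r)) (x m) := by
    unfold gdown
    exact ((((hexp.mul_const _).div_const 2).mul_const (p j)).mul_const (p k)).div_const _
  rw [pd, hfull.deriv, gdown]
  ring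

lemma pd_gdown_p (σ : (Fin 4 → ℝ) → ℝ)
    (x p : Fin 4 → ℝ) (hp : ∀ i, 0 < p i) (m j k : Fin 4) :
    pd (fun p' => gdown σ x p' j k) m p
      = (kron j m + kron k m - 1/2) * gdown σ x p j k / p m := by
  set Q : ℝ := ∏ r ∈ Finset.univ.erase m, p r with hQdef
  have hQ : 0 < Q := Finset.prod_pos (fun r _ => hp r)
  have hPm : 0 < p m := hp m
  have hprod : ∀ s : ℝ, (∏ r, Function.update p m s r) = s * Q := by
    intro s
    rw [hQdef, Finset.erase_eq]
    exact Finset.prod_update_of_mem (Finset.mem_univ m) p s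
  have hPQ : (∏ r, p r) = p m * Q := by
    simpa [Function.update_eq_self] using hprod (p m)
  have hsq0 : (0:ℝ) < Real.sqrt (p m * Q) := Real.sqrt_pos.mpr (mul_pos hPm hQ)
  set C : ℝ := Real.exp (2 * σ x) * (1 - 2 * kron j k) / 2 with hCdef
  have hA : ∀ a : Fin 4, HasDerivAt (fun s => Function.update p m s a) (kron a m) (p m) := by
    intro a
    by_cases h : a = m
    · subst h
      simp only [kron, if_pos rfl]
      simpa [Function.update_apply] using hasDerivAt_id' (p a)
    · simp only [kron, if_neg h]
      simpa [Function.update_apply, h] using hasDerivAt_const (p m) (p a)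
  have hsq : HasDerivAt (fun s => Real.sqrt (s * Q)) (1 / (2 * Real.sqrt (p m * Q)) * Q) (p m) := by
    have h1 : HasDerivAt (fun s : ℝ => s * Q) Q (p m) := by
      simpa using (hasDerivAt_id (p m)).mul_const Q
    exact (Real.hasDerivAt_sqrt (ne_of_gt (mul_pos hPm hQ))).comp (p m) h1
  have hnum : HasDerivAt (fun s => C * Function.update p m s j * Function.update p m s k)
      (C * kron j m * p k + C * p j * kron k m) (p m) := by
    have := ((hA j).const_mul C).mul (hA k)
    simp only [Function.update_eq_self] at this
    exact this
  have hfull : HasDerivAt (fun s => C * Function.update p m s j * Function.update p m s k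
      / Real.sqrt (s * Q))
      (((C * kron j m * p k + C * p j * kron k m) * Real.sqrt (p m * Q)
        - C * p j * p k * (1 / (2 * Real.sqrt (p m * Q)) * Q)) / (Real.sqrt (p m * Q))^2)
      (p m) := by
    have := hnum.div hsq (ne_of_gt hsq0)
    simp only [Function.update_eq_self] at this
    exact this
  have heq : (fun s => gdown σ x (Function.update p m s) j k)
      = fun s => C * Function.update p m s j * Function.update p m s k / Real.sqrt (s * Q) := by
    funext s
    rw [gdown, hprod s, hCdef]
  rw [pd, heq, hfull.deriv, gdown, hPQ, hCdef]
  have hsq2 : Real.sqrt (p m * Q) * Real.sqrt (p m * Q) = p m * Q :=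
    Real.mul_self_sqrt (le_of_lt (mul_pos hPm hQ))
  set S := Real.sqrt (p m * Q) with hS
  have hS0 : (0:ℝ) < S := hsq0
  have hQS : Q = S * S / p m := by
    rw [hsq2]; field_simp
  rw [hQS]
  rcases eq_or_ne j m with hj | hj <;> rcases eq_or_ne k m with hk | hk <;>
    simp only [kron, hj, hk, if_pos rfl, if_neg, ite_true, ite_false] <;>
    field_simp <;> ring

lemma deltaXg_eq (σ : (Fin 4 → ℝ) → ℝ) (hσ : ContDiff ℝ (⊤ : ℕ∞) σ) (x p : Fin 4 → ℝ)
    (hp : ∀ i, 0 < p i) (m j k : Fin 4) :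
    deltaXg σ x p m j k = 4 * pd σ m x * (kron j m + kron k m) * gdown σ x p j k := by
  rw [deltaXg, pd_gdown_x σ hσ x p m j k, pd_gdown_p σ x p hp m j k]
  have hm : p m ≠ 0 := ne_of_gt (hp m)
  field_simp
  ring

set_option maxHeartbeats 100000000 in
/-- the Cartan coefficient
`H^i_{jk} = Σ_r (g^{ir}/2)(δg_{jr}/δx^k + δg_{kr}/δx^j − δg_{jk}/δx^r)`
equals `4 δ^i_j δ^i_k σ_i(x)`. -/
theorem stmt_4 (σ : (Fin 4 → ℝ) → ℝ) (hσ : ContDiff ℝ (⊤ : ℕ∞) σ)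
    (x p : Fin 4 → ℝ) (hp : ∀ i, 0 < p i) (i j k : Fin 4) :
    (∑ r, (gup σ x p i r / 2) *
      (deltaXg σ x p k j r + deltaXg σ x p j k r - deltaXg σ x p r j k))
    = 4 * kron i j * kron i k * pd σ i x := by
  simp only [deltaXg_eq σ hσ x p hp]
  have hP : (0:ℝ) < ∏ m, p m := Finset.prod_pos (fun r _ => hp r)
  have hs : Real.sqrt (∏ m, p m) ≠ 0 := ne_of_gt (Real.sqrt_pos.mpr hP)
  have hexp : Real.exp (-2 * σ x) = (Real.exp (2 * σ x))⁻¹ := by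
    rw [show (-2:ℝ) * σ x = -(2 * σ x) by ring, Real.exp_neg]
  rw [Fin.sum_univ_four]
  simp only [gup, gdown, hexp]
  have h0 : p 0 ≠ 0 := (hp 0).ne'
  have h1 : p 1 ≠ 0 := (hp 1).ne'
  have h2 : p 2 ≠ 0 := (hp 2).ne'
  have h3 : p 3 ≠ 0 := (hp 3).ne'
  have hE : Real.exp (σ x * 2) ≠ 0 := Real.exp_ne_zero _
  fin_cases i <;> fin_cases j <;> fin_cases k <;>
    (simp (config := { decide := true }) only [kron, if_true, if_false, Fin.reduceFinMk]
     norm_num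
     try field_simp
     try ring
     try tauto)
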